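/- arXiv:1304.5466 — 2 statements merged into one kernel-verified Lean document; each statement's English description precedes it below -/
import Mathlib

section
/- For i, j = 0,…,⌊n/2⌋, k = 0,…,n, u ∈ U_i and v ∈ U_j, one has uᵀ W_{i,k} W_{k,j} v = δ_{i,j} · q^{i(k−i)} [n−2i choose k−i]_q · uᵀ v, where δ_{i,j} is the Kronecker delta. -/
open Matrix

/-- The Gaussian binomial coefficient `[a choose b]_q`, as a real number:
`∏_{i=0}^{b-1} (q^(a-i)-1)/(q^(b-i)-1)` for `a, b ≥ 0`, and `0` if `a < 0` or `b < 0`. -/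
noncomputable def gbinom (q : ℝ) (a b : ℤ) : ℝ :=
  if 0 ≤ a ∧ 0 ≤ b then
    ∏ i ∈ Finset.range b.toNat, (q ^ (a - i) - 1) / (q ^ (b - i) - 1)
  else 0

/-- The matrix `W_{k,ℓ}` on `L(V) × L(V)`: `(W_{k,ℓ})_{x,y} = 1` if `dim x = k`, `dim y = ℓ`
and `dim (x ⊓ y) = min k ℓ`, and `0` otherwise.  (Indices in `ℤ`, so that `W_{-1,0} = 0`.) -/
noncomputable def Wmat (K V : Type*) [Field K] [AddCommGroup V] [Module K V] (k l : ℤ) :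
    Matrix (Submodule K V) (Submodule K V) ℝ :=
  Matrix.of fun x y =>
    if (Module.finrank K x : ℤ) = k ∧ (Module.finrank K y : ℤ) = l ∧
        (Module.finrank K ↥(x ⊓ y) : ℤ) = min k l then 1 else 0

/-- The subspace `U_i ⊆ ℝ^{L(V)}` of vectors supported on `L_i(V)` and killed by
`W_{i-1,i}`. -/
noncomputable def Usub (K V : Type*) [Field K] [AddCommGroup V] [Module K V]
    [Fintype (Submodule K V)] (i : ℕ) : Submodule ℝ (Submodule K V → ℝ) :=
  LinearMap.ker (Matrix.mulVecLin (Wmat K V ((i : ℤ) - 1) (i : ℤ))) ⊓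
    ⨅ x ∈ {x : Submodule K V | Module.finrank K x ≠ i},
      LinearMap.ker (LinearMap.proj (R := ℝ) (φ := fun _ : Submodule K V => ℝ) x)

/-!
Since `W_{i,k}ᵀ = W_{k,i}`, the left side is `f k = (W_{k,i} u) ⬝ᵥ (W_{k,j} v)`, and by symmetry we
may take `i ≤ j`. The number of `m`-dimensional subspaces between `x ≤ z` is a Gaussian binomial;
counting such intervals gives `W_{k+1,k} W_{k,i} = (q^{k+1-i} - 1)/(q - 1) · W_{k+1,i}` and
`W_{k,k+1} W_{k+1,j} = (q^{n-k} - q^j)/(q-1) · W_{k,j} + W_{k,j-1} W_{j-1,j}`, whose last term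
kills `U_j`. Moving `W_{k+1,k}` across the dot product yields the recurrence
`(q^{k+1-i} - 1) f (k+1) = (q^{n-k} - q^j) f k` for `k ≥ j`, which the right side satisfies as
well. Both sides vanish for `k < j` (as `W_{k,j} v = 0`) and equal `δ_{ij} uᵀv` at `k = j`.
-/

open Module Finset

section GaussianBinomial

variable {q : ℝ} {a b : ℤ}

theorem zpow_sub_one_ne_zero (hq : 1 < q) {m : ℤ} (hm : 0 < m) : q ^ m - 1 ≠ 0 :=
  sub_ne_zero.2 (one_lt_zpow₀ hq hm).ne'

theorem gbinom_of_neg (hb : b < 0) : gbinom q a b = 0 :=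
  if_neg fun h => hb.not_ge h.2

theorem gbinom_zero (ha : 0 ≤ a) : gbinom q a 0 = 1 := by
  simp [gbinom, ha]

theorem gbinom_of_lt (ha : 0 ≤ a) (hab : a < b) : gbinom q a b = 0 := by
  rw [gbinom, if_pos ⟨ha, ha.trans hab.le⟩]
  refine prod_eq_zero (i := a.toNat) (mem_range.2 (by omega)) ?_
  rw [Int.toNat_of_nonneg ha, sub_self, zpow_zero, sub_self, zero_div]

theorem gbinom_self (hq : 1 < q) (ha : 0 ≤ a) : gbinom q a a = 1 := by
  rw [gbinom, if_pos ⟨ha, ha⟩]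
  exact prod_eq_one fun i hi => div_self (zpow_sub_one_ne_zero hq (by simp at hi; omega))

theorem gbinom_add_one_mul (hq : 1 < q) (hb : 0 ≤ b) :
    gbinom q a (b + 1) * (q ^ (b + 1) - 1) = gbinom q a b * (q ^ (a - b) - 1) := by
  rcases lt_or_ge a 0 with ha | ha
  · simp [gbinom, ha.not_ge]
  lift b to ℕ using hb
  have hden : ∏ i ∈ range b, (q ^ ((b : ℤ) - i) - 1) ≠ 0 :=
    prod_ne_zero_iff.2 fun i hi => zpow_sub_one_ne_zero hq (by simp at hi; omega)
  have htop : q ^ ((b : ℤ) + 1) - 1 ≠ 0 := zpow_sub_one_ne_zero hq (by omega)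
  rw [gbinom, gbinom, if_pos ⟨ha, by omega⟩, if_pos ⟨ha, by omega⟩,
    show ((b : ℤ) + 1).toNat = b + 1 by omega, Int.toNat_natCast, prod_div_distrib,
    prod_div_distrib, prod_range_succ, prod_range_succ']
  simp only [Nat.cast_add, Nat.cast_one, Nat.cast_zero, sub_zero, add_sub_add_right_eq_sub]
  field_simp

theorem gbinom_one (hq : 1 < q) (ha : 0 ≤ a) : gbinom q a 1 = (q ^ a - 1) / (q - 1) := by
  have h := gbinom_add_one_mul (a := a) hq le_rfl
  rw [zero_add, gbinom_zero ha, zpow_one, one_mul, sub_zero] at h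
  exact eq_div_of_mul_eq (sub_ne_zero.2 hq.ne') h

theorem gbinom_sub_one (hq : 1 < q) (ha : 0 ≤ a) :
    gbinom q a (a - 1) = (q ^ a - 1) / (q - 1) := by
  rcases ha.eq_or_lt with rfl | ha
  · simp [gbinom_of_neg]
  have h := gbinom_add_one_mul (a := a) hq (b := a - 1) (by omega)
  rw [sub_add_cancel, gbinom_self hq ha.le, one_mul, sub_sub_cancel, zpow_one] at h
  exact eq_div_of_mul_eq (sub_ne_zero.2 hq.ne') h.symm

theorem zpow_sub_one_mul_zpow_mul_gbinom (hq : 1 < q) {n i k : ℤ} (hik : i ≤ k) :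
    (q ^ (k + 1 - i) - 1) * (q ^ (i * (k + 1 - i)) * gbinom q (n - 2 * i) (k + 1 - i)) =
      (q ^ (n - k) - q ^ i) * (q ^ (i * (k - i)) * gbinom q (n - 2 * i) (k - i)) := by
  have hq0 : q ≠ 0 := by positivity
  have h := gbinom_add_one_mul (a := n - 2 * i) hq (b := k - i) (by omega)
  rw [show k - i + 1 = k + 1 - i by ring, show n - 2 * i - (k - i) = n - i - k by ring] at h
  have e1 : q ^ (i * (k + 1 - i)) = q ^ (i * (k - i)) * q ^ i := by
    rw [← zpow_add₀ hq0]; ring_nf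
  have e2 : q ^ (n - k) = q ^ i * q ^ (n - i - k) := by
    rw [← zpow_add₀ hq0]; ring_nf
  rw [e1, e2]
  linear_combination (q ^ (i * (k - i)) * q ^ i) * h

theorem gbinom_mul_prod_pow_sub (hq : 1 < q) (N d : ℕ) :
    gbinom q N d * ∏ i ∈ range d, (q ^ d - q ^ i) = ∏ i ∈ range d, (q ^ N - q ^ i) := by
  rw [gbinom, if_pos ⟨by positivity, by positivity⟩, Int.toNat_natCast, ← prod_mul_distrib]
  refine prod_congr rfl fun i hi => ?_
  have hq0 : q ≠ 0 := by positivity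
  have hsplit : ∀ m : ℕ, q ^ m = q ^ i * q ^ ((m : ℤ) - i) := fun m => by
    rw [← zpow_natCast, ← zpow_natCast, ← zpow_add₀ hq0, add_sub_cancel]
  rw [hsplit d, hsplit N, div_mul_eq_mul_div,
    div_eq_iff (zpow_sub_one_ne_zero hq (by simp at hi; omega))]
  ring

end GaussianBinomial

section SubmoduleFinrank

variable {K V : Type*} [Field K] [AddCommGroup V] [Module K V] [FiniteDimensional K V]

theorem Submodule.finrank_comap_mkQ (x : Submodule K V) (P : Submodule K (V ⧸ x)) :
    finrank K (P.comap x.mkQ) = finrank K P + finrank K x := by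
  have h := LinearMap.finrank_range_add_finrank_ker (x.mkQ.comp (P.comap x.mkQ).subtype)
  rwa [LinearMap.range_comp, Submodule.range_subtype,
    Submodule.map_comap_eq_of_surjective x.mkQ_surjective, LinearMap.ker_comp, x.ker_mkQ,
    (Submodule.comapSubtypeEquivOfLe (x.le_comap_mkQ P)).finrank_eq, eq_comm] at h

theorem Submodule.finrank_inf_eq_left_iff {x y : Submodule K V} :
    finrank K ↥(x ⊓ y) = finrank K x ↔ x ≤ y :=
  ⟨fun h => inf_eq_left.1 (Submodule.eq_of_le_of_finrank_eq inf_le_left h),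
    fun h => by rw [inf_of_le_left h]⟩

theorem Submodule.finrank_inf_eq_right_iff {x y : Submodule K V} :
    finrank K ↥(x ⊓ y) = finrank K y ↔ y ≤ x := by
  rw [inf_comm, Submodule.finrank_inf_eq_left_iff]

end SubmoduleFinrank

section Counting

variable {K V : Type*} [Field K] [Fintype K] [AddCommGroup V] [Module K V]
  [FiniteDimensional K V]

local notation "q" => (Fintype.card K : ℝ)

theorem one_lt_card_real : 1 < q := by exact_mod_cast Fintype.one_lt_card

theorem card_linearIndependent_real {d : ℕ} (hd : d ≤ finrank K V) :
    (Nat.card {s : Fin d → V // LinearIndependent K s} : ℝ) =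
      ∏ i ∈ range d, (q ^ finrank K V - q ^ i) := by
  have : Finite V := Module.finite_of_finite K
  rw [card_linearIndependent hd, Fin.prod_univ_eq_prod_range (fun i => _ ^ _ - _ ^ i),
    Nat.cast_prod]
  refine prod_congr rfl fun i hi => ?_
  rw [Nat.cast_sub (Nat.pow_le_pow_right Fintype.card_pos (by simp at hi; omega))]
  push_cast
  rfl

def linearIndependentSpanEquiv {d : ℕ} (p : Submodule K V) (hp : finrank K p = d) :
    {s : Fin d → V // LinearIndependent K s ∧ Submodule.span K (Set.range s) = p} ≃
      {t : Fin d → p // LinearIndependent K t} where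
  toFun s := ⟨fun i => ⟨s.1 i, s.2.2.le (Submodule.subset_span (Set.mem_range_self i))⟩,
    .of_comp p.subtype s.2.1⟩
  invFun t := ⟨fun i => t.1 i, t.2.map' p.subtype p.ker_subtype, by
    refine Submodule.eq_of_le_of_finrank_eq (Submodule.span_le.2 ?_) ?_
    · rintro _ ⟨i, rfl⟩
      exact (t.1 i).2
    · exact (finrank_span_eq_card (t.2.map' p.subtype p.ker_subtype)).trans (by simp [hp])⟩
  left_inv _ := rfl
  right_inv _ := rfl

theorem card_finrank_mul_prod {d : ℕ} (hd : d ≤ finrank K V) :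
    (Nat.card {p : Submodule K V // finrank K p = d} : ℝ) * ∏ i ∈ range d, (q ^ d - q ^ i) =
      ∏ i ∈ range d, (q ^ finrank K V - q ^ i) := by
  have : Finite V := Module.finite_of_finite K
  have : Fintype {p : Submodule K V // finrank K p = d} := Fintype.ofFinite _
  let span : {s : Fin d → V // LinearIndependent K s} → {p : Submodule K V // finrank K p = d} :=
    fun s => ⟨Submodule.span K (Set.range s.1), by rw [finrank_span_eq_card s.2, Fintype.card_fin]⟩
  have hfiber (p : {p : Submodule K V // finrank K p = d}) :
      (Nat.card {s // span s = p} : ℝ) = ∏ i ∈ range d, (q ^ d - q ^ i) := by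
    have e := (Equiv.subtypeSubtypeEquivSubtypeInter (fun s : Fin d → V => LinearIndependent K s)
      (fun s => Submodule.span K (Set.range s) = p)).trans (linearIndependentSpanEquiv p.1 p.2)
    have hcard := card_linearIndependent_real (K := K) (V := p.1) p.2.ge
    rw [p.2] at hcard
    rw [← hcard]
    exact congrArg _ (Nat.card_congr ((Equiv.subtypeEquivRight fun s => Subtype.ext_iff).trans e))
  rw [← card_linearIndependent_real hd, ← Nat.card_congr (Equiv.sigmaFiberEquiv span),
    Nat.card_sigma, Nat.cast_sum, sum_congr rfl fun p _ => hfiber p, sum_const, card_univ,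
    nsmul_eq_mul, Nat.card_eq_fintype_card]

theorem card_finrank_eq_gbinom (d : ℤ) :
    (Nat.card {p : Submodule K V // (finrank K p : ℤ) = d} : ℝ) =
      gbinom q (finrank K V) d := by
  rcases lt_or_ge d 0 with hd | hd
  · have : IsEmpty {p : Submodule K V // (finrank K p : ℤ) = d} := ⟨fun p => by omega⟩
    rw [gbinom_of_neg hd, Nat.card_of_isEmpty, Nat.cast_zero]
  lift d to ℕ using hd
  simp only [Nat.cast_inj]
  rcases lt_or_ge (finrank K V) d with hVd | hdV
  · have : IsEmpty {p : Submodule K V // finrank K p = d} :=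
      ⟨fun p => (p.2 ▸ Submodule.finrank_le p.1).not_gt hVd⟩
    rw [gbinom_of_lt (by positivity) (by exact_mod_cast hVd), Nat.card_of_isEmpty, Nat.cast_zero]
  have hprod : ∏ i ∈ range d, (q ^ d - q ^ i) ≠ 0 :=
    prod_ne_zero_iff.2 fun i hi => sub_ne_zero.2
      (pow_lt_pow_right₀ one_lt_card_real (mem_range.1 hi)).ne'
  refine mul_right_cancel₀ hprod ?_
  rw [card_finrank_mul_prod hdV, gbinom_mul_prod_pow_sub one_lt_card_real]

theorem card_Ici_finrank (x : Submodule K V) (m : ℤ) :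
    (Nat.card {w : Submodule K V // x ≤ w ∧ (finrank K w : ℤ) = m} : ℝ) =
      gbinom q (finrank K V - finrank K x) (m - finrank K x) := by
  have e : {P : Submodule K (V ⧸ x) // (finrank K P : ℤ) = m - finrank K x} ≃
      {w : Submodule K V // x ≤ w ∧ (finrank K w : ℤ) = m} :=
    (Equiv.subtypeEquiv (Submodule.comapMkQRelIso x).toEquiv fun P => by
      change _ ↔ ((finrank K (P.comap x.mkQ) : ℕ) : ℤ) = m
      rw [Submodule.finrank_comap_mkQ]
      omega).trans
    (Equiv.subtypeSubtypeEquivSubtypeInter (· ∈ Set.Ici x) fun w => (finrank K w : ℤ) = m)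
  rw [← Nat.card_congr e, card_finrank_eq_gbinom, ← x.finrank_quotient_add_finrank,
    Nat.cast_add, add_sub_cancel_right]

theorem card_Icc_finrank {x z : Submodule K V} (hxz : x ≤ z) (m : ℤ) :
    (Nat.card {w : Submodule K V // x ≤ w ∧ w ≤ z ∧ (finrank K w : ℤ) = m} : ℝ) =
      gbinom q (finrank K z - finrank K x) (m - finrank K x) := by
  have e : {w : Submodule K z // x.comap z.subtype ≤ w ∧ (finrank K w : ℤ) = m} ≃
      {w : Submodule K V // x ≤ w ∧ w ≤ z ∧ (finrank K w : ℤ) = m} :=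
    (Equiv.subtypeEquiv (Submodule.MapSubtype.orderIso z).toEquiv fun w => by
      change _ ∧ _ ↔ x ≤ w.map z.subtype ∧ (finrank K (w.map z.subtype) : ℤ) = m
      rw [← Submodule.map_le_map_iff_of_injective z.injective_subtype,
        Submodule.map_comap_subtype, inf_of_le_right hxz, Submodule.finrank_map_subtype_eq]).trans
    ((Equiv.subtypeSubtypeEquivSubtypeInter (· ≤ z) fun w => x ≤ w ∧ (finrank K w : ℤ) = m).trans
      (Equiv.subtypeEquivRight fun _ => and_left_comm))
  rw [← Nat.card_congr e, card_Ici_finrank,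
    (Submodule.comapSubtypeEquivOfLe hxz).finrank_eq]

theorem card_Iic_finrank (z : Submodule K V) (m : ℤ) :
    (Nat.card {w : Submodule K V // w ≤ z ∧ (finrank K w : ℤ) = m} : ℝ) =
      gbinom q (finrank K z) m := by
  simpa using card_Icc_finrank (bot_le : ⊥ ≤ z) m

end Counting

theorem sum_ite_and_eq_natCard {α : Type*} [Fintype α] (C : Prop) [Decidable C] (P : α → Prop)
    [DecidablePred P] :
    ∑ w, (if C ∧ P w then (1 : ℝ) else 0) = if C then (Nat.card {w // P w} : ℝ) else 0 := by
  by_cases hC : C <;> simp [hC, sum_boole, Nat.card_eq_fintype_card, Fintype.card_subtype]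

section Incidence

variable {K V : Type*} [Field K] [AddCommGroup V] [Module K V]

theorem Wmat_transpose (a b : ℤ) : (Wmat K V a b)ᵀ = Wmat K V b a := by
  ext x y
  simp only [transpose_apply, Wmat, of_apply, min_comm b]
  rw [inf_comm y x]
  exact if_congr (by tauto) rfl rfl

variable [FiniteDimensional K V]

open scoped Classical in
theorem Wmat_apply_of_le {a b : ℤ} (hab : a ≤ b) (x y : Submodule K V) :
    Wmat K V a b x y =
      if (finrank K x : ℤ) = a ∧ (finrank K y : ℤ) = b ∧ x ≤ y then 1 else 0 := by
  refine if_congr (and_congr_right fun hx => and_congr_right fun _ => ?_) rfl rfl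
  rw [min_eq_left hab, ← hx, Nat.cast_inj, Submodule.finrank_inf_eq_left_iff]

open scoped Classical in
theorem Wmat_apply_of_ge {a b : ℤ} (hba : b ≤ a) (x y : Submodule K V) :
    Wmat K V a b x y =
      if (finrank K x : ℤ) = a ∧ (finrank K y : ℤ) = b ∧ y ≤ x then 1 else 0 := by
  refine if_congr (and_congr_right fun _ => and_congr_right fun hy => ?_) rfl rfl
  rw [min_eq_right hba, ← hy, Nat.cast_inj, Submodule.finrank_inf_eq_right_iff]

theorem Wmat_self (a : ℤ) :
    Wmat K V a a = diagonal fun x : Submodule K V => if (finrank K x : ℤ) = a then 1 else 0 := by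
  ext x y
  rw [Wmat_apply_of_le le_rfl, diagonal_apply]
  by_cases hxy : x = y
  · subst hxy
    simp
  · refine (if_neg fun h => hxy ?_).trans (if_neg hxy).symm
    exact Submodule.eq_of_le_of_finrank_eq h.2.2 (by omega)

variable [Fintype (Submodule K V)]

omit [FiniteDimensional K V] in
theorem dotProduct_Wmat_mulVec (a b : ℤ) (u w : Submodule K V → ℝ) :
    u ⬝ᵥ (Wmat K V a b *ᵥ w) = (Wmat K V b a *ᵥ u) ⬝ᵥ w := by
  rw [dotProduct_mulVec, ← Wmat_transpose b a, vecMul_transpose]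

omit [FiniteDimensional K V] in
theorem mem_Usub_iff {i : ℕ} {u : Submodule K V → ℝ} :
    u ∈ Usub K V i ↔
      Wmat K V (i - 1) i *ᵥ u = 0 ∧ ∀ x : Submodule K V, finrank K x ≠ i → u x = 0 := by
  simp [Usub, Submodule.mem_iInf]

theorem Wmat_self_mulVec_of_mem_Usub {i : ℕ} {u : Submodule K V → ℝ} (hu : u ∈ Usub K V i) :
    Wmat K V i i *ᵥ u = u := by
  ext x
  rw [Wmat_self, mulVec_diagonal]
  by_cases hx : finrank K x = i
  · simp [hx]
  · simp [hx, (mem_Usub_iff.1 hu).2 x hx]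

theorem Wmat_mul_Wmat_apply_of_le_of_le {a b c : ℤ} (hab : a ≤ b) (hbc : b ≤ c)
    (x y : Submodule K V) :
    (Wmat K V a b * Wmat K V b c) x y =
      if (finrank K x : ℤ) = a ∧ (finrank K y : ℤ) = c then
        (Nat.card {w // x ≤ w ∧ w ≤ y ∧ (finrank K w : ℤ) = b} : ℝ) else 0 := by
  classical
  rw [mul_apply, ← sum_ite_and_eq_natCard]
  refine sum_congr rfl fun w _ => ?_
  rw [Wmat_apply_of_le hab, Wmat_apply_of_le hbc, ite_zero_mul_ite_zero, one_mul]
  exact if_congr (by tauto) rfl rfl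

theorem Wmat_mul_Wmat_apply_of_le_of_ge {a b c : ℤ} (hab : a ≤ b) (hcb : c ≤ b)
    (x y : Submodule K V) :
    (Wmat K V a b * Wmat K V b c) x y =
      if (finrank K x : ℤ) = a ∧ (finrank K y : ℤ) = c then
        (Nat.card {w // x ⊔ y ≤ w ∧ (finrank K w : ℤ) = b} : ℝ) else 0 := by
  classical
  rw [mul_apply, ← sum_ite_and_eq_natCard]
  refine sum_congr rfl fun w _ => ?_
  rw [Wmat_apply_of_le hab, Wmat_apply_of_ge hcb, ite_zero_mul_ite_zero, one_mul]
  exact if_congr (by rw [sup_le_iff]; tauto) rfl rfl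

theorem Wmat_mul_Wmat_apply_of_ge_of_le {a b c : ℤ} (hba : b ≤ a) (hbc : b ≤ c)
    (x y : Submodule K V) :
    (Wmat K V a b * Wmat K V b c) x y =
      if (finrank K x : ℤ) = a ∧ (finrank K y : ℤ) = c then
        (Nat.card {w // w ≤ x ⊓ y ∧ (finrank K w : ℤ) = b} : ℝ) else 0 := by
  classical
  rw [mul_apply, ← sum_ite_and_eq_natCard]
  refine sum_congr rfl fun w _ => ?_
  rw [Wmat_apply_of_ge hba, Wmat_apply_of_le hbc, ite_zero_mul_ite_zero, one_mul]
  exact if_congr (by rw [le_inf_iff]; tauto) rfl rfl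

variable [Fintype K]

local notation "q" => (Fintype.card K : ℝ)

theorem Wmat_mul_Wmat_of_le_of_le {a b c : ℤ} (hab : a ≤ b) (hbc : b ≤ c) :
    Wmat K V a b * Wmat K V b c = gbinom q (c - a) (b - a) • Wmat K V a c := by
  ext x y
  rw [Wmat_mul_Wmat_apply_of_le_of_le hab hbc, Matrix.smul_apply,
    Wmat_apply_of_le (hab.trans hbc), smul_eq_mul]
  by_cases hxy : x ≤ y
  · split_ifs with h h' h'
    · rw [card_Icc_finrank hxy, h.1, h.2, mul_one]
    · exact absurd ⟨h.1, h.2, hxy⟩ h'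
    · exact absurd ⟨h'.1, h'.2.1⟩ h
    · rw [mul_zero]
  · have : IsEmpty {w // x ≤ w ∧ w ≤ y ∧ (finrank K w : ℤ) = b} :=
      ⟨fun w => hxy (w.2.1.trans w.2.2.1)⟩
    simp [hxy]

theorem Wmat_mul_Wmat_succ {a b : ℤ} (hab : a ≤ b) :
    Wmat K V a b * Wmat K V b (b + 1) =
      ((q ^ (b + 1 - a) - 1) / (q - 1)) • Wmat K V a (b + 1) := by
  rw [Wmat_mul_Wmat_of_le_of_le hab (by omega), ← gbinom_sub_one one_lt_card_real (by omega)]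
  ring_nf

theorem Wmat_succ_mul_Wmat {a b : ℤ} (hab : a ≤ b) :
    Wmat K V (b + 1) b * Wmat K V b a =
      ((q ^ (b + 1 - a) - 1) / (q - 1)) • Wmat K V (b + 1) a := by
  rw [← Wmat_transpose a b, ← Wmat_transpose b (b + 1), ← transpose_mul, Wmat_mul_Wmat_succ hab,
    transpose_smul, Wmat_transpose]

theorem Wmat_mul_Wmat_succ_eq_add {i k : ℤ} (hik : i ≤ k) :
    Wmat K V k (k + 1) * Wmat K V (k + 1) i =
      ((q ^ ((finrank K V : ℤ) - k) - q ^ i) / (q - 1)) • Wmat K V k i +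
        Wmat K V k (i - 1) * Wmat K V (i - 1) i := by
  have hq := one_lt_card_real (K := K)
  ext w x
  rw [Matrix.add_apply, Matrix.smul_apply, Wmat_mul_Wmat_apply_of_le_of_ge (by omega) (by omega),
    Wmat_mul_Wmat_apply_of_ge_of_le (by omega) (by omega), Wmat_apply_of_ge hik, smul_eq_mul]
  by_cases h : (finrank K w : ℤ) = k ∧ (finrank K x : ℤ) = i
  swap
  · rw [if_neg h, if_neg h, if_neg fun h' => h ⟨h'.1, h'.2.1⟩]
    simp
  obtain ⟨hw, hx⟩ := h
  simp only [hw, hx, true_and, if_true]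
  rw [card_Ici_finrank, card_Iic_finrank]
  -- both counts depend only on `d = dim (w ⊓ x)`: `d = i` iff `x ≤ w`, else `d = i - 1` or less
  have hsd : ((finrank K ↥(w ⊔ x) : ℕ) : ℤ) + finrank K ↥(w ⊓ x) = k + i := by
    rw [← hw, ← hx]
    exact_mod_cast Submodule.finrank_sup_add_finrank_inf_eq w x
  have hdx : finrank K ↥(w ⊓ x) ≤ finrank K x := Submodule.finrank_mono inf_le_right
  have hsV : finrank K ↥(w ⊔ x) ≤ finrank K V := Submodule.finrank_le _
  rcases lt_trichotomy ((finrank K ↥(w ⊓ x) : ℕ) : ℤ) (i - 1) with hd | hd | hd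
  · have hxw : ¬ x ≤ w := fun hxw => by
      rw [← Submodule.finrank_inf_eq_right_iff] at hxw
      omega
    rw [gbinom_of_neg (by omega), gbinom_of_lt (by omega) hd, if_neg fun h => hxw h.2.2]
    simp
  · have hxw : ¬ x ≤ w := fun hxw => by
      rw [← Submodule.finrank_inf_eq_right_iff] at hxw
      omega
    rw [show (k + 1 - finrank K ↥(w ⊔ x) : ℤ) = 0 by omega, gbinom_zero (by omega), hd,
      gbinom_self hq (by omega), if_neg fun h => hxw h.2.2]
    simp
  · have hxw : x ≤ w := Submodule.finrank_inf_eq_right_iff.1 (by omega)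
    rw [show (k + 1 - finrank K ↥(w ⊔ x) : ℤ) = 1 by omega,
      show (finrank K V - finrank K ↥(w ⊔ x) : ℤ) = finrank K V - k by omega,
      gbinom_one hq (by omega), show ((finrank K ↥(w ⊓ x) : ℕ) : ℤ) = i by omega,
      gbinom_sub_one hq (by omega), if_pos ⟨hw, hx, hxw⟩]
    ring

theorem Wmat_mulVec_of_mem_Usub_of_lt {i : ℕ} {u : Submodule K V → ℝ} (hu : u ∈ Usub K V i)
    {k : ℤ} (hki : k < i) : Wmat K V k i *ᵥ u = 0 := by
  have h := congrArg (Wmat K V k (i - 1) *ᵥ ·) (mem_Usub_iff.1 hu).1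
  simp only [mulVec_mulVec, mulVec_zero] at h
  have hW := Wmat_mul_Wmat_succ (K := K) (V := V) (a := k) (b := i - 1) (by omega)
  rw [sub_add_cancel] at hW
  rw [hW, smul_mulVec, smul_eq_zero] at h
  refine h.resolve_left (div_ne_zero (zpow_sub_one_ne_zero one_lt_card_real (by omega)) ?_)
  exact sub_ne_zero.2 one_lt_card_real.ne'

theorem Wmat_mul_Wmat_succ_mulVec_of_mem_Usub {j : ℕ} {v : Submodule K V → ℝ}
    (hv : v ∈ Usub K V j) {k : ℤ} (hjk : j ≤ k) :
    Wmat K V k (k + 1) *ᵥ (Wmat K V (k + 1) j *ᵥ v) =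
      ((q ^ ((finrank K V : ℤ) - k) - q ^ (j : ℤ)) / (q - 1)) • (Wmat K V k j *ᵥ v) := by
  rw [mulVec_mulVec, Wmat_mul_Wmat_succ_eq_add hjk, add_mulVec, smul_mulVec, ← mulVec_mulVec,
    (mem_Usub_iff.1 hv).1, mulVec_zero, add_zero]

theorem dotProduct_Wmat_mulVec_succ {i j : ℕ} (u : Submodule K V → ℝ) {v : Submodule K V → ℝ}
    (hv : v ∈ Usub K V j) {k : ℤ} (hik : i ≤ k) (hjk : j ≤ k) :
    (q ^ (k + 1 - i) - 1) * ((Wmat K V (k + 1) i *ᵥ u) ⬝ᵥ (Wmat K V (k + 1) j *ᵥ v)) =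
      (q ^ ((finrank K V : ℤ) - k) - q ^ (j : ℤ)) *
        ((Wmat K V k i *ᵥ u) ⬝ᵥ (Wmat K V k j *ᵥ v)) := by
  have hq1 : q - 1 ≠ 0 := sub_ne_zero.2 one_lt_card_real.ne'
  have h : (q ^ (k + 1 - i) - 1) / (q - 1) *
      ((Wmat K V (k + 1) i *ᵥ u) ⬝ᵥ (Wmat K V (k + 1) j *ᵥ v)) =
      (q ^ ((finrank K V : ℤ) - k) - q ^ (j : ℤ)) / (q - 1) *
        ((Wmat K V k i *ᵥ u) ⬝ᵥ (Wmat K V k j *ᵥ v)) := by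
    rw [← smul_eq_mul, ← smul_dotProduct, ← smul_mulVec, ← Wmat_succ_mul_Wmat hik,
      ← mulVec_mulVec, ← dotProduct_Wmat_mulVec, Wmat_mul_Wmat_succ_mulVec_of_mem_Usub hv hjk,
      dotProduct_smul, smul_eq_mul]
  rwa [div_mul_eq_mul_div, div_mul_eq_mul_div, div_left_inj' hq1] at h

theorem dotProduct_Wmat_mulVec_Wmat_mulVec {n i j : ℕ} (hV : finrank K V = n) (h2i : 2 * i ≤ n)
    (hij : i ≤ j) {u v : Submodule K V → ℝ} (hu : u ∈ Usub K V i) (hv : v ∈ Usub K V j)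
    (k : ℕ) :
    (Wmat K V k i *ᵥ u) ⬝ᵥ (Wmat K V k j *ᵥ v) =
      (if i = j then 1 else 0) * q ^ ((i : ℤ) * ((k : ℤ) - i)) *
        gbinom q ((n : ℤ) - 2 * i) ((k : ℤ) - i) * (u ⬝ᵥ v) := by
  rcases lt_or_ge k j with hkj | hjk
  · rw [Wmat_mulVec_of_mem_Usub_of_lt hv (by exact_mod_cast hkj), dotProduct_zero]
    split_ifs with h
    · rw [gbinom_of_neg (by omega), mul_zero, zero_mul]
    · simp
  induction k, hjk using Nat.le_induction with
  | base =>
    rw [Wmat_self_mulVec_of_mem_Usub hv]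
    rcases hij.eq_or_lt with rfl | hij
    · rw [Wmat_self_mulVec_of_mem_Usub hu, if_pos rfl, sub_self, mul_zero, zpow_zero,
        gbinom_zero (by omega), one_mul, one_mul, one_mul]
    · rw [← dotProduct_Wmat_mulVec, Wmat_mulVec_of_mem_Usub_of_lt hv (by exact_mod_cast hij),
        dotProduct_zero, if_neg hij.ne]
      simp
  | succ k hjk ih =>
    have hq := one_lt_card_real (K := K)
    refine mul_left_cancel₀ (zpow_sub_one_ne_zero hq (by omega : (0 : ℤ) < k + 1 - i)) ?_
    push_cast
    rw [dotProduct_Wmat_mulVec_succ u hv (by omega) (by omega), ih, hV]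
    split_ifs with h
    · subst h
      linear_combination (u ⬝ᵥ v) *
        (zpow_sub_one_mul_zpow_mul_gbinom hq (n := n) (i := i) (k := k) (by omega)).symm
    · simp

end Incidence

theorem dot_Wmat_Wmat_general
    {K V : Type*} [Field K] [Fintype K] [AddCommGroup V] [Module K V] [FiniteDimensional K V]
    [Fintype (Submodule K V)]
    (n i j k : ℕ) (hV : Module.finrank K V = n) (hi : i ≤ n / 2) (hj : j ≤ n / 2)
    (u v : Submodule K V → ℝ) (hu : u ∈ Usub K V i) (hv : v ∈ Usub K V j) :
    u ⬝ᵥ (Wmat K V i k * Wmat K V k j).mulVec v =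
      (if i = j then 1 else 0) * (Fintype.card K : ℝ) ^ ((i : ℤ) * ((k : ℤ) - i)) *
        gbinom (Fintype.card K) ((n : ℤ) - 2 * i) ((k : ℤ) - i) * (u ⬝ᵥ v) := by
  rw [← mulVec_mulVec, dotProduct_Wmat_mulVec]
  rcases le_total i j with hij | hji
  · exact dotProduct_Wmat_mulVec_Wmat_mulVec hV (by omega) hij hu hv k
  · rw [dotProduct_comm, dotProduct_Wmat_mulVec_Wmat_mulVec hV (by omega) hji hv hu k]
    by_cases hij : i = j
    · subst hij
      rw [dotProduct_comm v u]
    · rw [if_neg (Ne.symm hij), if_neg hij]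
      simp

/-- For `0 ≤ i, j ≤ ⌊n/2⌋`, `0 ≤ k ≤ n`, `u ∈ U_i` and `v ∈ U_j`:
`uᵀ W_{i,k} W_{k,j} v = δ_{i,j} q^{i(k-i)} [n-2i choose k-i]_q (uᵀ v)`. -/
theorem dot_Wmat_Wmat
    {K V : Type*} [Field K] [Fintype K] [AddCommGroup V] [Module K V] [FiniteDimensional K V]
    [Fintype (Submodule K V)]
    (n i j k : ℕ) (hV : Module.finrank K V = n) (hi : i ≤ n / 2) (hj : j ≤ n / 2) (hk : k ≤ n)
    (u v : Submodule K V → ℝ) (hu : u ∈ Usub K V i) (hv : v ∈ Usub K V j) :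
    u ⬝ᵥ (Wmat K V i k * Wmat K V k j).mulVec v =
      (if i = j then 1 else 0) * (Fintype.card K : ℝ) ^ ((i : ℤ) * ((k : ℤ) - i)) *
        gbinom (Fintype.card K) ((n : ℤ) - 2 * i) ((k : ℤ) - i) * (u ⬝ᵥ v) :=
  dot_Wmat_Wmat_general n i j k hV hi hj u v hu hv
end

section
/- Let 1 ≤ ℓ < k ≤ n/2. For i = 2,…,ℓ−1 one has (θ_{i+1}^{k,ℓ} / θ_i^{k,ℓ})² = q^{2i−k−ℓ}(q^{k−i}−1)(q^{ℓ−i}−1) / ((q^{n−k−i}−1)(q^{n−ℓ−i}−1)), and this quantity is strictly less than 1. -/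
/-- The eigenvalue
`θ_i^{k,ℓ} = (-1)^i q^{C(i,2) + kℓ - i(k+ℓ)/2} [n-k-i choose ℓ-i] [n-2i choose k-i]^{1/2}
[n-2i choose ℓ-i]^{-1/2}` for `i ≤ k ≤ n - i`, and `0` if `k < i` or `k > n - i`.
(The half-integer power of `q` is expressed via `√q`.) -/
noncomputable def theta (q : ℝ) (n i k l : ℕ) : ℝ :=
  if i ≤ k ∧ k ≤ n - i then
    (-1) ^ i * (Real.sqrt q) ^ ((i * (i - 1) : ℤ) + 2 * k * l - i * (k + l)) *
      gbinom q ((n : ℤ) - k - i) ((l : ℤ) - i) *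
      Real.sqrt (gbinom q ((n : ℤ) - 2 * i) ((k : ℤ) - i)) *
      (Real.sqrt (gbinom q ((n : ℤ) - 2 * i) ((l : ℤ) - i)))⁻¹
  else 0

open Finset

lemma zpow_sub_one_pos {q : ℝ} (hq : 1 < q) {m : ℤ} (hm : 0 < m) : 0 < q ^ m - 1 :=
  sub_pos.mpr (one_lt_zpow₀ hq hm)

section Gbinom

variable {q : ℝ}

lemma gbinom_natCast {a : ℤ} (ha : 0 ≤ a) (b : ℕ) :
    gbinom q a b = ∏ j ∈ range b, (q ^ (a - j) - 1) / (q ^ ((b : ℤ) - j) - 1) := by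
  simp [gbinom, ha]

lemma gbinom_pos (hq : 1 < q) {a b : ℤ} (hb : 0 ≤ b) (hba : b ≤ a) : 0 < gbinom q a b := by
  lift b to ℕ using hb
  rw [gbinom_natCast (by omega)]
  refine prod_pos fun j hj => div_pos ?_ ?_ <;>
    · have := mem_range.mp hj
      exact zpow_sub_one_pos hq (by omega)

lemma gbinom_eq_mul_gbinom_sub_one_sub_one {a b : ℤ} (ha : 1 ≤ a) (hb : 1 ≤ b) :
    gbinom q a b = (q ^ a - 1) / (q ^ b - 1) * gbinom q (a - 1) (b - 1) := by
  obtain ⟨B, rfl⟩ : ∃ B : ℕ, b = B + 1 := ⟨(b - 1).toNat, by omega⟩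
  rw [add_sub_cancel_right, ← Nat.cast_succ, gbinom_natCast (by omega),
    gbinom_natCast (by omega), prod_range_succ']
  push_cast
  rw [sub_zero, sub_zero, mul_comm]
  congr 1
  exact prod_congr rfl fun j _ => by ring_nf

lemma gbinom_eq_mul_gbinom_sub_one (hq : 1 < q) {a b : ℤ} (hb : 0 ≤ b) (hba : b < a) :
    gbinom q a b = (q ^ a - 1) / (q ^ (a - b) - 1) * gbinom q (a - 1) b := by
  lift b to ℕ using hb
  have hne : q ^ (a - b) - 1 ≠ 0 := (zpow_sub_one_pos hq (by omega)).ne'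
  have htop : (∏ j ∈ range b, (q ^ (a - j) - 1)) * (q ^ (a - b) - 1) =
      (q ^ a - 1) * ∏ j ∈ range b, (q ^ (a - 1 - j) - 1) := by
    rw [← prod_range_succ (fun j : ℕ => q ^ (a - j) - 1), prod_range_succ']
    push_cast
    simp only [sub_zero, sub_add_eq_sub_sub, sub_right_comm a _ 1, mul_comm]
  rw [gbinom_natCast (by omega), gbinom_natCast (by omega), prod_div_distrib, prod_div_distrib,
    ← mul_div_assoc, div_mul_eq_mul_div, ← htop, mul_div_cancel_right₀ _ hne]

lemma gbinom_eq_mul_gbinom_sub_two_sub_one (hq : 1 < q) {a b : ℤ} (hb : 1 ≤ b) (hba : b < a) :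
    gbinom q a b = (q ^ a - 1) * (q ^ (a - 1) - 1) / ((q ^ b - 1) * (q ^ (a - b) - 1)) *
      gbinom q (a - 2) (b - 1) := by
  rw [gbinom_eq_mul_gbinom_sub_one_sub_one (by omega) hb,
    gbinom_eq_mul_gbinom_sub_one hq (by omega) (by omega), sub_sub_sub_cancel_right,
    sub_sub, one_add_one_eq_two, ← mul_assoc, div_mul_div_comm]

end Gbinom

lemma theta_sq {q : ℝ} (hq : 1 < q) {n j k l : ℕ} (hjl : j ≤ l) (hlk : l ≤ k) (hkn : k + j ≤ n) :
    theta q n j k l ^ 2 =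
      q ^ ((j * (j - 1) : ℤ) + 2 * k * l - j * (k + l)) * gbinom q (n - k - j) (l - j) ^ 2 *
        gbinom q (n - 2 * j) (k - j) / gbinom q (n - 2 * j) (l - j) := by
  have hsqrt_zpow (e : ℤ) : (√q ^ e) ^ 2 = q ^ e := by
    rw [← zpow_natCast, ← zpow_mul, mul_comm, zpow_mul, zpow_natCast, Real.sq_sqrt (by positivity)]
  have hk : 0 ≤ gbinom q (n - 2 * j) (k - j) := (gbinom_pos hq (by omega) (by omega)).le
  have hl : 0 ≤ gbinom q (n - 2 * j) (l - j) := (gbinom_pos hq (by omega) (by omega)).le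
  rw [theta, if_pos ⟨by omega, by omega⟩]
  simp only [mul_pow, inv_pow, hsqrt_zpow, ← pow_mul, pow_mul', neg_one_sq, one_pow, one_mul,
    Real.sq_sqrt hk, Real.sq_sqrt hl, div_eq_mul_inv]

lemma theta_succ_div_theta_sq {q : ℝ} (hq : 1 < q) {n i k l : ℕ} (hil : i < l) (hlk : l < k)
    (hkn : 2 * k ≤ n) :
    (theta q n (i + 1) k l / theta q n i k l) ^ 2 =
      q ^ ((2 * i : ℤ) - k - l) * (q ^ ((k : ℤ) - i) - 1) * (q ^ ((l : ℤ) - i) - 1) /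
        ((q ^ ((n : ℤ) - k - i) - 1) * (q ^ ((n : ℤ) - l - i) - 1)) := by
  rw [div_pow, theta_sq hq hil hlk.le (by omega), theta_sq hq hil.le hlk.le (by omega)]
  push_cast
  rw [show ((i : ℤ) + 1) * (i + 1 - 1) + 2 * k * l - (i + 1) * (k + l) =
      (i * (i - 1) + 2 * k * l - i * (k + l)) + (2 * i - k - l) by ring,
    show (n : ℤ) - k - (i + 1) = n - k - i - 1 by ring, show (l : ℤ) - (i + 1) = l - i - 1 by ring,
    show (n : ℤ) - 2 * (i + 1) = n - 2 * i - 2 by ring, show (k : ℤ) - (i + 1) = k - i - 1 by ring]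
  rw [gbinom_eq_mul_gbinom_sub_one_sub_one (a := (n : ℤ) - k - i) (b := (l : ℤ) - i) (by omega)
      (by omega),
    gbinom_eq_mul_gbinom_sub_two_sub_one hq (a := (n : ℤ) - 2 * i) (b := (k : ℤ) - i) (by omega)
      (by omega),
    gbinom_eq_mul_gbinom_sub_two_sub_one hq (a := (n : ℤ) - 2 * i) (b := (l : ℤ) - i) (by omega)
      (by omega), zpow_add₀ (by positivity), show (n : ℤ) - 2 * i - (k - i) = n - k - i by ring,
    show (n : ℤ) - 2 * i - (l - i) = n - l - i by ring]
  have hq0 : q ^ ((i * (i - 1) : ℤ) + 2 * k * l - i * (k + l)) ≠ 0 := by positivity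
  have hA : gbinom q (n - k - i - 1) (l - i - 1) ≠ 0 := (gbinom_pos hq (by omega) (by omega)).ne'
  have hB : gbinom q (n - 2 * i - 2) (k - i - 1) ≠ 0 := (gbinom_pos hq (by omega) (by omega)).ne'
  have hC : gbinom q (n - 2 * i - 2) (l - i - 1) ≠ 0 := (gbinom_pos hq (by omega) (by omega)).ne'
  have hk : q ^ ((k : ℤ) - i) - 1 ≠ 0 := (zpow_sub_one_pos hq (by omega)).ne'
  have hnk : q ^ ((n : ℤ) - k - i) - 1 ≠ 0 := (zpow_sub_one_pos hq (by omega)).ne'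
  have hnl : q ^ ((n : ℤ) - l - i) - 1 ≠ 0 := (zpow_sub_one_pos hq (by omega)).ne'
  have hn : q ^ ((n : ℤ) - 2 * i) - 1 ≠ 0 := (zpow_sub_one_pos hq (by omega)).ne'
  have hn1 : q ^ ((n : ℤ) - 2 * i - 1) - 1 ≠ 0 := (zpow_sub_one_pos hq (by omega)).ne'
  field_simp

lemma one_le_zpow_sub_one {q : ℝ} (hq : 2 ≤ q) {m : ℤ} (hm : 1 ≤ m) : 1 ≤ q ^ m - 1 := by
  have := zpow_le_zpow_right₀ (by linarith : 1 ≤ q) hm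
  rw [zpow_one] at this
  linarith

lemma zpow_neg_add_mul_sub_one_mul_sub_one_div_lt_one {q : ℝ} (hq : 2 ≤ q) {s t u v : ℤ}
    (hs : 0 ≤ s) (hu : 1 ≤ u) (hv : 1 ≤ v) :
    q ^ (-(s + t)) * (q ^ s - 1) * (q ^ t - 1) / ((q ^ u - 1) * (q ^ v - 1)) < 1 := by
  have hq0 : q ≠ 0 := by positivity
  have hnum : q ^ (-(s + t)) * (q ^ s - 1) * (q ^ t - 1) = (1 - q ^ (-s)) * (1 - q ^ (-t)) := by
    rw [neg_add, zpow_add₀ hq0]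
    linear_combination (q ^ (-t) * q ^ t - q ^ (-t)) * zpow_neg_mul_zpow_self s hq0 +
      (1 - q ^ (-s)) * zpow_neg_mul_zpow_self t hq0
  have hs_pos : 0 < q ^ (-s) := by positivity
  have hs_le : q ^ (-s) ≤ 1 := zpow_le_one_of_nonpos₀ (by linarith) (by omega)
  have ht_pos : 0 < q ^ (-t) := by positivity
  have hden : 1 ≤ (q ^ u - 1) * (q ^ v - 1) :=
    one_le_mul_of_one_le_of_one_le (one_le_zpow_sub_one hq hu) (one_le_zpow_sub_one hq hv)
  rw [div_lt_one (by linarith), hnum]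
  calc (1 - q ^ (-s)) * (1 - q ^ (-t)) ≤ 1 - q ^ (-s) :=
        mul_le_of_le_one_right (by linarith) (by linarith)
    _ < 1 := by linarith
    _ ≤ _ := hden

theorem theta_ratio_sq_general
    (q n k l : ℕ) (hq : IsPrimePow q)
    (hlk : l < k) (hkn : 2 * k ≤ n)
    (i : ℕ) (hil : i < l) :
    (theta (q : ℝ) n (i + 1) k l / theta (q : ℝ) n i k l) ^ 2 =
      (q : ℝ) ^ ((2 * i : ℤ) - k - l) * ((q : ℝ) ^ ((k : ℤ) - i) - 1) *
        ((q : ℝ) ^ ((l : ℤ) - i) - 1) /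
        (((q : ℝ) ^ ((n : ℤ) - k - i) - 1) * ((q : ℝ) ^ ((n : ℤ) - l - i) - 1)) ∧
    (q : ℝ) ^ ((2 * i : ℤ) - k - l) * ((q : ℝ) ^ ((k : ℤ) - i) - 1) *
        ((q : ℝ) ^ ((l : ℤ) - i) - 1) /
        (((q : ℝ) ^ ((n : ℤ) - k - i) - 1) * ((q : ℝ) ^ ((n : ℤ) - l - i) - 1)) < 1 := by
  have hq2 : (2 : ℝ) ≤ q := by exact_mod_cast hq.two_le
  refine ⟨theta_succ_div_theta_sq (by linarith) hil hlk hkn, ?_⟩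
  rw [show (2 * i : ℤ) - k - l = -(((k : ℤ) - i) + ((l : ℤ) - i)) by ring]
  exact zpow_neg_add_mul_sub_one_mul_sub_one_div_lt_one hq2 (by omega) (by omega) (by omega)

/-- **The ratio of consecutive eigenvalues.** For `1 ≤ ℓ < k ≤ n/2` and `2 ≤ i ≤ ℓ - 1`:
`(θ_{i+1}^{k,ℓ} / θ_i^{k,ℓ})² = q^{2i-k-ℓ}(q^{k-i}-1)(q^{ℓ-i}-1)/((q^{n-k-i}-1)(q^{n-ℓ-i}-1))`,
and this quantity is strictly less than `1`. -/
theorem theta_ratio_sq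
    (q n k l : ℕ) (hq : IsPrimePow q)
    (hl1 : 1 ≤ l) (hlk : l < k) (hkn : 2 * k ≤ n)
    (i : ℕ) (hi2 : 2 ≤ i) (hil : i < l) :
    (theta (q : ℝ) n (i + 1) k l / theta (q : ℝ) n i k l) ^ 2 =
      (q : ℝ) ^ ((2 * i : ℤ) - k - l) * ((q : ℝ) ^ ((k : ℤ) - i) - 1) *
        ((q : ℝ) ^ ((l : ℤ) - i) - 1) /
        (((q : ℝ) ^ ((n : ℤ) - k - i) - 1) * ((q : ℝ) ^ ((n : ℤ) - l - i) - 1)) ∧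
    (q : ℝ) ^ ((2 * i : ℤ) - k - l) * ((q : ℝ) ^ ((k : ℤ) - i) - 1) *
        ((q : ℝ) ^ ((l : ℤ) - i) - 1) /
        (((q : ℝ) ^ ((n : ℤ) - k - i) - 1) * ((q : ℝ) ^ ((n : ℤ) - l - i) - 1)) < 1 :=
  theta_ratio_sq_general q n k l hq hlk hkn i hil
end
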